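/- Let H be a groupoid and N a normal wide subgroupoid (conjugation of loops of N by arrows of H stays in N). Let π : H → H//N be the two-sided quotient functor. Then: (1) π is full, surjective on objects and star-surjective; (2) the kernel of π (arrows sent to identities) is exactly N; (3) for any functor f : H → G of groupoids whose kernel contains N (f sends every arrow of N to an identity), there is a unique functor f̄ : H//N → G with f̄ ∘ π = f. -/
import Mathlib


open CategoryTheory

universe u v u₂ v₂

/-- The two-sided relation on arrows of `H` induced by a subgroupoid `N`:
`h ~ h'` iff `h' = n₂ ∘ h ∘ n₁` for some arrows `n₁, n₂` of `N`.  The quotient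
`Quot (ArrRel S)` is the arrow set of `H ⫽ N`. -/
def ArrRel {H : Type u} [Groupoid.{v} H] (S : Subgroupoid H) :
    (Σ (x y : H), x ⟶ y) → (Σ (x y : H), x ⟶ y) → Prop :=
  fun a b => ∃ (n₁ : b.1 ⟶ a.1) (n₂ : a.2.1 ⟶ b.2.1),
    n₁ ∈ S.arrows b.1 a.1 ∧ n₂ ∈ S.arrows a.2.1 b.2.1 ∧ b.2.2 = n₁ ≫ a.2.2 ≫ n₂

/-- The relation on objects of `H`: connected by an arrow of `N`.  The quotient
`Quot (ObjRel S)` is the object set of `H ⫽ N`. -/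
def ObjRel {H : Type u} [Groupoid.{v} H] (S : Subgroupoid H) : H → H → Prop :=
  fun x y => ∃ n : x ⟶ y, n ∈ S.arrows x y

lemma objRel_equiv {H : Type u} [Groupoid.{v} H] {S : Subgroupoid H} (hS : S.IsNormal) :
    Equivalence (ObjRel S) := by
  constructor
  · exact fun x => ⟨𝟙 x, hS.wide x⟩
  · rintro x y ⟨n, hn⟩; exact ⟨Groupoid.inv n, S.inv hn⟩
  · rintro x y z ⟨n, hn⟩ ⟨m, hm⟩; exact ⟨n ≫ m, S.mul hn hm⟩

lemma arrRel_equiv {H : Type u} [Groupoid.{v} H] {S : Subgroupoid H} (hS : S.IsNormal) :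
    Equivalence (ArrRel S) := by
  constructor
  · exact fun a => ⟨𝟙 a.1, 𝟙 a.2.1, hS.wide a.1, hS.wide a.2.1, by simp⟩
  · rintro a b ⟨n₁, n₂, h₁, h₂, he⟩
    exact ⟨Groupoid.inv n₁, Groupoid.inv n₂, S.inv h₁, S.inv h₂, by
      simp [he]⟩
  · rintro a b c ⟨n₁, n₂, h₁, h₂, he⟩ ⟨m₁, m₂, g₁, g₂, ge⟩
    exact ⟨m₁ ≫ n₁, n₂ ≫ m₂, S.mul g₁ h₁, S.mul h₂ g₂, by
      simp [ge, he]⟩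

lemma sigma_eq_aux {G : Type u₂} [Groupoid.{v₂} G] {c d c' d' : G}
    (e₁ : c' = c) (e₂ : d = d') (g : c ⟶ d) :
    (⟨c, d, g⟩ : Σ (x y : G), x ⟶ y) = ⟨c', d', eqToHom e₁ ≫ g ≫ eqToHom e₂⟩ := by
  subst e₁; subst e₂; simp

/-- For a normal wide subgroupoid `N` of a groupoid `H` and the quotient map
`π : H → H ⫽ N`: (1) `π` is surjective on objects, full, and star-surjective;
(2) the kernel of `π` (arrows sent to identities) is exactly `N`; (3) any
functor `f : H ⥤ G` to a groupoid whose kernel contains `N` factors uniquely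
through `π`, on objects and on arrows. -/
theorem stmt13 {H : Type u} [Groupoid.{v} H] (S : Subgroupoid H) (hS : S.IsNormal) :
    Function.Surjective (Quot.mk (ObjRel S)) ∧
    (∀ (x y : H) (a : Σ (c d : H), c ⟶ d),
      Quot.mk (ObjRel S) a.1 = Quot.mk (ObjRel S) x →
      Quot.mk (ObjRel S) a.2.1 = Quot.mk (ObjRel S) y →
      ∃ h : x ⟶ y, Quot.mk (ArrRel S) ⟨x, y, h⟩ = Quot.mk (ArrRel S) a) ∧
    (∀ (x : H) (a : Σ (c d : H), c ⟶ d),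
      Quot.mk (ObjRel S) a.1 = Quot.mk (ObjRel S) x →
      ∃ (y : H) (h : x ⟶ y), Quot.mk (ArrRel S) ⟨x, y, h⟩ = Quot.mk (ArrRel S) a) ∧
    (∀ (x y : H) (h : x ⟶ y),
      (∃ z : H, Quot.mk (ArrRel S) ⟨x, y, h⟩ = Quot.mk (ArrRel S) ⟨z, z, 𝟙 z⟩) ↔
        h ∈ S.arrows x y) ∧
    (∀ {G : Type u₂} [Groupoid.{v₂} G] (f : H ⥤ G),
      (∀ (x y : H) (n : x ⟶ y), n ∈ S.arrows x y →
        ∃ e : f.obj x = f.obj y, f.map n = eqToHom e) →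
      (∃! fo : Quot (ObjRel S) → G, ∀ x : H, fo (Quot.mk (ObjRel S) x) = f.obj x) ∧
      (∃! fa : Quot (ArrRel S) → Σ (c d : G), c ⟶ d,
        ∀ a : Σ (c d : H), c ⟶ d,
          fa (Quot.mk (ArrRel S) a) = ⟨f.obj a.1, f.obj a.2.1, f.map a.2.2⟩)) := by
  have objRel_of_eq : ∀ {x y : H},
      Quot.mk (ObjRel S) x = Quot.mk (ObjRel S) y → ObjRel S x y := fun h =>
    ((objRel_equiv hS).eqvGen_iff).mp (Quot.eq.mp h)
  have arrRel_of_eq : ∀ {a b : Σ (c d : H), c ⟶ d},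
      Quot.mk (ArrRel S) a = Quot.mk (ArrRel S) b → ArrRel S a b := fun h =>
    ((arrRel_equiv hS).eqvGen_iff).mp (Quot.eq.mp h)
  refine ⟨fun q => Quot.exists_rep q, ?_, ?_, ?_, ?_⟩
  · rintro x y ⟨c, d, h⟩ hc hd
    obtain ⟨n₁, hn₁⟩ := (objRel_equiv hS).symm (objRel_of_eq hc)
    obtain ⟨n₂, hn₂⟩ := objRel_of_eq hd
    exact ⟨n₁ ≫ h ≫ n₂, (Quot.sound ⟨n₁, n₂, hn₁, hn₂, rfl⟩).symm⟩
  · rintro x ⟨c, d, h⟩ hc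
    obtain ⟨n₁, hn₁⟩ := (objRel_equiv hS).symm (objRel_of_eq hc)
    exact ⟨d, n₁ ≫ h, (Quot.sound ⟨n₁, 𝟙 d, hn₁, hS.wide d, by simp⟩).symm⟩
  · intro x y h
    constructor
    · rintro ⟨z, hz⟩
      obtain ⟨n₁, n₂, hn₁, hn₂, he⟩ := arrRel_of_eq hz
      have : h = Groupoid.inv n₁ ≫ Groupoid.inv n₂ := by
        have h2 : Groupoid.inv n₁ ≫ (n₁ ≫ h ≫ n₂) ≫ Groupoid.inv n₂ = h := by simp
        dsimp at he
        rw [← he] at h2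
        simpa using h2.symm
      rw [this]; exact S.mul (S.inv hn₁) (S.inv hn₂)
    · intro hmem
      exact ⟨x, Quot.sound ⟨𝟙 x, Groupoid.inv h, hS.wide x, S.inv hmem, by simp⟩⟩
  · intro G _ f hf
    constructor
    · refine ⟨Quot.lift f.obj ?_, fun x => rfl, ?_⟩
      · rintro x y ⟨n, hn⟩; exact (hf x y n hn).1
      · intro g hg; funext q
        induction q using Quot.ind with
        | _ x => exact (hg x).trans rfl
    · refine ⟨Quot.lift (fun a => ⟨f.obj a.1, f.obj a.2.1, f.map a.2.2⟩) ?_,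
        fun a => rfl, ?_⟩
      · rintro a b ⟨n₁, n₂, hn₁, hn₂, he⟩
        obtain ⟨e₁, he₁⟩ := hf _ _ n₁ hn₁
        obtain ⟨e₂, he₂⟩ := hf _ _ n₂ hn₂
        have : f.map b.2.2 = eqToHom e₁ ≫ f.map a.2.2 ≫ eqToHom e₂ := by
          rw [he, f.map_comp, f.map_comp, he₁, he₂]
        rcases b with ⟨bc, bd, bh⟩
        dsimp only at this ⊢
        rw [this]
        exact sigma_eq_aux e₁ e₂ (f.map a.2.2)
      · intro g hg; funext q
        induction q using Quot.ind with
        | _ a => exact (hg a).trans rfl
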